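/- For every n ≥ 1 and every r > 0 there exist ε₀ > 0 and C > 0 with the following property: for every Z ∈ ℝ^{n×n} with |Z| ≤ r, every ε ∈ (0, ε₀], and every i ∈ {1, …, n}, one has |σ_i(exp(εZ)) − 1 − ε λ_i(Z_sym)| ≤ C ε². -/

import Mathlib

open MeasureTheory Filter Matrix

noncomputable def frobSq {n : ℕ} (X : Matrix (Fin n) (Fin n) ℝ) : ℝ := ∑ i, ∑ j, (X i j)^2
noncomputable def frob {n : ℕ} (X : Matrix (Fin n) (Fin n) ℝ) : ℝ := Real.sqrt (frobSq X)
noncomputable def msym {n : ℕ} (X : Matrix (Fin n) (Fin n) ℝ) : Matrix (Fin n) (Fin n) ℝ :=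
  (1/2 : ℝ) • (X + Xᵀ)
noncomputable def mdev {n : ℕ} (X : Matrix (Fin n) (Fin n) ℝ) : Matrix (Fin n) (Fin n) ℝ :=
  X - (X.trace / n) • (1 : Matrix (Fin n) (Fin n) ℝ)
noncomputable def mils {n : ℕ} (X : Matrix (Fin n) (Fin n) ℝ) : Matrix (Fin n) (Fin n) ℝ :=
  msym X - (X.trace / n) • (1 : Matrix (Fin n) (Fin n) ℝ)

/-- Matrix exponential, defined by its power series. -/
noncomputable def mexp {n : ℕ} (A : Matrix (Fin n) (Fin n) ℝ) : Matrix (Fin n) (Fin n) ℝ :=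
  ∑' k : ℕ, ((k.factorial : ℝ)⁻¹) • A ^ k

/-- The eigenvalues of a symmetric real matrix, listed in ascending order
(and junk value `0` if the matrix is not symmetric). -/
noncomputable def sortedEig {n : ℕ} (A : Matrix (Fin n) (Fin n) ℝ) : Fin n → ℝ :=
  if hA : A.IsHermitian then fun i => hA.eigenvalues (Tuple.sort hA.eigenvalues i) else 0

/-- The singular values of a real square matrix in ascending order. -/
noncomputable def singVals {n : ℕ} (X : Matrix (Fin n) (Fin n) ℝ) : Fin n → ℝ :=
  fun i => Real.sqrt (sortedEig (Xᵀ * X) i)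

/-- The Jacobian matrix of a map `ℝ^n → ℝ^n`. -/
noncomputable def jac {n : ℕ} (u : EuclideanSpace ℝ (Fin n) → EuclideanSpace ℝ (Fin n))
    (x : EuclideanSpace ℝ (Fin n)) : Matrix (Fin n) (Fin n) ℝ :=
  fun i j => fderiv ℝ u x (EuclideanSpace.single j 1) i

/-! Write `X = e^{εZ} = 1 + εZ + E`; in the Frobenius norm `‖E‖ ≤ (εr)²` once `εr ≤ 1`, so
`XᵀX = 1 + 2ε Z_sym + R` with `‖R‖ ≤ 6(εr)²`. Hence the Rayleigh quotients of `XᵀX` and of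
`1 + 2ε Z_sym` differ by at most `6(εr)²` on unit vectors, and by the Courant–Fischer dimension count
the same holds for their `i`-th smallest eigenvalues: `λ_i(XᵀX) = (1 + ε λ_i(Z_sym))² + O(ε²)`.
Taking square roots, which is Lipschitz near `1`, gives `σ_i(X) = 1 + ε λ_i(Z_sym) + O(ε²)`. -/

open scoped RealInnerProductSpace Matrix.Norms.Frobenius

section ExpTail

variable {𝔸 : Type*} [NormedRing 𝔸] [NormedAlgebra ℝ 𝔸] [CompleteSpace 𝔸]

theorem norm_exp_sub_one_sub_le (x : 𝔸) :
    ‖NormedSpace.exp x - 1 - x‖ ≤ Real.exp ‖x‖ - 1 - ‖x‖ := by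
  have hx := (hasSum_nat_add_iff' 2).mpr (NormedSpace.exp_series_hasSum_exp' (𝕂 := ℝ) x)
  have ht := (hasSum_nat_add_iff' 2).mpr (NormedSpace.exp_series_hasSum_exp' (𝕂 := ℝ) ‖x‖)
  simp only [Finset.sum_range_succ, Finset.range_one, Finset.sum_singleton, Nat.factorial_zero,
    Nat.factorial_one, Nat.cast_one, inv_one, pow_zero, pow_one, one_smul, smul_eq_mul, mul_one,
    one_mul, ← Real.exp_eq_exp_ℝ] at hx ht
  rw [sub_sub, sub_sub]
  refine hx.norm_le_of_bounded ht fun k => ?_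
  rw [norm_smul, norm_inv, Real.norm_natCast]
  exact mul_le_mul_of_nonneg_left (norm_pow_le' x (by omega)) (by positivity)

end ExpTail

section MatrixExp

variable {n : ℕ}

theorem frob_eq_norm (X : Matrix (Fin n) (Fin n) ℝ) : frob X = ‖X‖ := by
  rw [frob, frobSq, frobenius_norm_def, Real.sqrt_eq_rpow]
  simp [Real.norm_eq_abs, sq_abs]

theorem mexp_eq_exp (A : Matrix (Fin n) (Fin n) ℝ) : mexp A = NormedSpace.exp A := by
  rw [NormedSpace.exp_eq_tsum ℝ]; rfl

theorem norm_mexp_sub_one_sub_le {A : Matrix (Fin n) (Fin n) ℝ} (hA : ‖A‖ ≤ 1) :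
    ‖mexp A - 1 - A‖ ≤ ‖A‖ ^ 2 := by
  rw [mexp_eq_exp]
  exact (norm_exp_sub_one_sub_le A).trans
    ((le_abs_self _).trans (Real.abs_exp_sub_one_sub_id_le (by rwa [abs_norm])))

end MatrixExp

section Rayleigh

variable {ι : Type*} [Fintype ι] [DecidableEq ι]

noncomputable def rayleigh (A : Matrix ι ι ℝ) (x : EuclideanSpace ℝ ι) : ℝ :=
  ⟪x, A.toEuclideanLin x⟫

theorem rayleigh_add (A B : Matrix ι ι ℝ) (x : EuclideanSpace ℝ ι) :
    rayleigh (A + B) x = rayleigh A x + rayleigh B x := by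
  rw [rayleigh, map_add, LinearMap.add_apply, inner_add_right, rayleigh, rayleigh]

theorem rayleigh_smul (c : ℝ) (A : Matrix ι ι ℝ) (x : EuclideanSpace ℝ ι) :
    rayleigh (c • A) x = c * rayleigh A x := by
  rw [rayleigh, map_smul, LinearMap.smul_apply, real_inner_smul_right, rayleigh]

theorem rayleigh_one {x : EuclideanSpace ℝ ι} (hx : ‖x‖ = 1) : rayleigh 1 x = 1 := by
  rw [rayleigh, toLpLin_one, LinearMap.id_apply, real_inner_self_eq_norm_sq, hx, one_pow]

theorem norm_toEuclideanLin_apply_le (A : Matrix ι ι ℝ) (x : EuclideanSpace ℝ ι) :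
    ‖A.toEuclideanLin x‖ ≤ ‖A‖ * ‖x‖ := by
  have h := frobenius_norm_mul A (replicateCol Unit x.ofLp)
  rwa [← replicateCol_mulVec, frobenius_norm_replicateCol, frobenius_norm_replicateCol] at h

theorem abs_rayleigh_le_norm (A : Matrix ι ι ℝ) {x : EuclideanSpace ℝ ι} (hx : ‖x‖ = 1) :
    |rayleigh A x| ≤ ‖A‖ := by
  calc |rayleigh A x| ≤ ‖x‖ * ‖A.toEuclideanLin x‖ := abs_real_inner_le_norm _ _
    _ ≤ ‖x‖ * (‖A‖ * ‖x‖) := by gcongr; exact norm_toEuclideanLin_apply_le A x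
    _ = ‖A‖ := by rw [hx, one_mul, mul_one]

variable {A : Matrix ι ι ℝ} (hA : A.IsHermitian)
include hA

theorem Matrix.IsHermitian.toEuclideanLin_eigenvectorBasis (j : ι) :
    A.toEuclideanLin (hA.eigenvectorBasis j) = hA.eigenvalues j • hA.eigenvectorBasis j := by
  rw [toLpLin_apply, hA.mulVec_eigenvectorBasis]; rfl

theorem Matrix.IsHermitian.rayleigh_eigenvectorBasis (j : ι) :
    rayleigh A (hA.eigenvectorBasis j) = hA.eigenvalues j := by
  rw [rayleigh, hA.toEuclideanLin_eigenvectorBasis, real_inner_smul_right,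
    real_inner_self_eq_norm_sq, hA.eigenvectorBasis.orthonormal.1 j, one_pow, mul_one]

theorem Matrix.IsHermitian.rayleigh_eq_sum (x : EuclideanSpace ℝ ι) :
    rayleigh A x = ∑ j, hA.eigenvalues j * hA.eigenvectorBasis.repr x j ^ 2 := by
  rw [rayleigh, ← hA.eigenvectorBasis.sum_inner_mul_inner]
  refine Finset.sum_congr rfl fun j _ => ?_
  rw [← (isSymmetric_toEuclideanLin_iff.mpr hA), hA.toEuclideanLin_eigenvectorBasis,
    real_inner_smul_left, real_inner_comm, ← OrthonormalBasis.repr_apply_apply]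
  ring

end Rayleigh

section MinMax

theorem exists_norm_eq_one_mem_of_lt_finrank_add {E : Type*} [NormedAddCommGroup E]
    [NormedSpace ℝ E] [FiniteDimensional ℝ E] {V W : Submodule ℝ E}
    (h : Module.finrank ℝ E < Module.finrank ℝ V + Module.finrank ℝ W) :
    ∃ x : E, ‖x‖ = 1 ∧ x ∈ V ∧ x ∈ W := by
  have hVW : ¬ Disjoint V W := fun hd => h.not_ge (Submodule.finrank_add_finrank_le_of_disjoint hd)
  obtain ⟨y, hyV, hyW, hy⟩ : ∃ y ∈ V, y ∈ W ∧ y ≠ 0 := by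
    simpa [Submodule.disjoint_def] using hVW
  exact ⟨‖y‖⁻¹ • y, norm_smul_inv_norm hy, V.smul_mem _ hyV, W.smul_mem _ hyW⟩

theorem LinearIndependent.finrank_span_image {K ι M : Type*} [DivisionRing K] [AddCommGroup M]
    [Module K M] {v : ι → M} (hv : LinearIndependent K v) (s : Finset ι) :
    Module.finrank K (Submodule.span K (v '' s)) = s.card := by
  rw [Set.image_eq_range]
  exact (finrank_span_eq_card (hv.comp _ Subtype.val_injective)).trans (Fintype.card_coe s)

theorem OrthonormalBasis.repr_eq_zero_of_mem_span_image {ι E : Type*} [Fintype ι]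
    [NormedAddCommGroup E] [InnerProductSpace ℝ E] (b : OrthonormalBasis ι ℝ E) {s : Set ι}
    {x : E} (hx : x ∈ Submodule.span ℝ (b '' s)) {j : ι} (hj : j ∉ s) : b.repr x j = 0 := by
  rw [← b.coe_toBasis, b.toBasis.mem_span_image] at hx
  rw [← b.coe_toBasis_repr_apply]
  exact Finsupp.notMem_support_iff.mp fun h => hj (hx h)

variable {ι : Type*} [Fintype ι] [DecidableEq ι] {A : Matrix ι ι ℝ} (hA : A.IsHermitian)
include hA

theorem Matrix.IsHermitian.sum_sq_repr (x : EuclideanSpace ℝ ι) :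
    ∑ j, hA.eigenvectorBasis.repr x j ^ 2 = ‖x‖ ^ 2 := by
  rw [← hA.eigenvectorBasis.repr.norm_map, EuclideanSpace.norm_sq_eq]
  simp only [Real.norm_eq_abs, sq_abs]

theorem Matrix.IsHermitian.le_rayleigh_of_mem_span {s : Set ι} {m : ℝ}
    (hm : ∀ j ∈ s, m ≤ hA.eigenvalues j) {x : EuclideanSpace ℝ ι} (hx : ‖x‖ = 1)
    (hxs : x ∈ Submodule.span ℝ (hA.eigenvectorBasis '' s)) : m ≤ rayleigh A x := by
  rw [hA.rayleigh_eq_sum, ← mul_one m, ← one_pow 2, ← hx, ← hA.sum_sq_repr, Finset.mul_sum]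
  refine Finset.sum_le_sum fun j _ => ?_
  by_cases hj : j ∈ s
  · exact mul_le_mul_of_nonneg_right (hm j hj) (sq_nonneg _)
  · simp [hA.eigenvectorBasis.repr_eq_zero_of_mem_span_image hxs hj]

theorem Matrix.IsHermitian.rayleigh_le_of_mem_span {s : Set ι} {m : ℝ}
    (hm : ∀ j ∈ s, hA.eigenvalues j ≤ m) {x : EuclideanSpace ℝ ι} (hx : ‖x‖ = 1)
    (hxs : x ∈ Submodule.span ℝ (hA.eigenvectorBasis '' s)) : rayleigh A x ≤ m := by
  rw [hA.rayleigh_eq_sum, ← mul_one m, ← one_pow 2, ← hx, ← hA.sum_sq_repr, Finset.mul_sum]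
  refine Finset.sum_le_sum fun j _ => ?_
  by_cases hj : j ∈ s
  · exact mul_le_mul_of_nonneg_right (hm j hj) (sq_nonneg _)
  · simp [hA.eigenvectorBasis.repr_eq_zero_of_mem_span_image hxs hj]

end MinMax

section SortedEigenvalues

variable {n : ℕ}

theorem sortedEig_eq {A : Matrix (Fin n) (Fin n) ℝ} (hA : A.IsHermitian) (i : Fin n) :
    sortedEig A i = hA.eigenvalues (Tuple.sort hA.eigenvalues i) := by
  rw [sortedEig, dif_pos hA]

theorem sortedEig_le_of_rayleigh_le {A B : Matrix (Fin n) (Fin n) ℝ} (hA : A.IsHermitian)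
    (hB : B.IsHermitian) {a b : ℝ} (hb : 0 ≤ b)
    (h : ∀ x : EuclideanSpace ℝ (Fin n), ‖x‖ = 1 → rayleigh A x ≤ a + b * rayleigh B x)
    (i : Fin n) : sortedEig A i ≤ a + b * sortedEig B i := by
  set σ := Tuple.sort hA.eigenvalues
  set τ := Tuple.sort hB.eigenvalues
  set s := (Finset.Ici i).image σ
  set t := (Finset.Iic i).image τ
  -- The eigenvectors of `A` at sorted positions `≥ i` and those of `B` at positions `≤ i` span
  -- subspaces of dimensions `n - i` and `i + 1`, which must meet.
  obtain ⟨x, hx, hxs, hxt⟩ := exists_norm_eq_one_mem_of_lt_finrank_add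
    (V := Submodule.span ℝ (hA.eigenvectorBasis '' s))
    (W := Submodule.span ℝ (hB.eigenvectorBasis '' t)) <| by
      rw [finrank_euclideanSpace_fin,
        hA.eigenvectorBasis.orthonormal.linearIndependent.finrank_span_image,
        hB.eigenvectorBasis.orthonormal.linearIndependent.finrank_span_image,
        Finset.card_image_of_injective _ σ.injective, Finset.card_image_of_injective _ τ.injective,
        Fin.card_Ici, Fin.card_Iic]
      omega
  have hAx : sortedEig A i ≤ rayleigh A x := by
    refine (sortedEig_eq hA i).trans_le (hA.le_rayleigh_of_mem_span ?_ hx hxs)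
    simp only [s, Finset.coe_image, Set.forall_mem_image, Finset.coe_Ici, Set.mem_Ici]
    exact fun k hk => Tuple.monotone_sort hA.eigenvalues hk
  have hBx : rayleigh B x ≤ sortedEig B i := by
    refine (hB.rayleigh_le_of_mem_span ?_ hx hxt).trans_eq (sortedEig_eq hB i).symm
    simp only [t, Finset.coe_image, Set.forall_mem_image, Finset.coe_Iic, Set.mem_Iic]
    exact fun k hk => Tuple.monotone_sort hB.eigenvalues hk
  calc sortedEig A i ≤ rayleigh A x := hAx
    _ ≤ a + b * rayleigh B x := h x hx
    _ ≤ a + b * sortedEig B i := by gcongr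

theorem abs_sortedEig_sub_le {A B : Matrix (Fin n) (Fin n) ℝ} (hA : A.IsHermitian)
    (hB : B.IsHermitian) {a b δ : ℝ} (hb : 0 < b)
    (h : ∀ x : EuclideanSpace ℝ (Fin n), ‖x‖ = 1 → |rayleigh A x - (a + b * rayleigh B x)| ≤ δ)
    (i : Fin n) : |sortedEig A i - (a + b * sortedEig B i)| ≤ δ := by
  have upper := sortedEig_le_of_rayleigh_le hA hB (a := a + δ) hb.le
    (fun x hx => by linarith [(abs_le.mp (h x hx)).2]) i
  have lower := sortedEig_le_of_rayleigh_le hB hA (a := b⁻¹ * (δ - a)) (b := b⁻¹) (by positivity)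
    (fun x hx => by
      rw [← mul_add, le_inv_mul_iff₀ hb]
      linarith [(abs_le.mp (h x hx)).1]) i
  rw [← mul_add, le_inv_mul_iff₀ hb] at lower
  rw [abs_le]
  constructor <;> linarith

theorem abs_sortedEig_le_norm {A : Matrix (Fin n) (Fin n) ℝ} (hA : A.IsHermitian) (i : Fin n) :
    |sortedEig A i| ≤ ‖A‖ := by
  rw [sortedEig_eq hA, ← hA.rayleigh_eigenvectorBasis]
  exact abs_rayleigh_le_norm A (hA.eigenvectorBasis.orthonormal.1 _)

theorem posSemidef_transpose_mul_self (X : Matrix (Fin n) (Fin n) ℝ) : (Xᵀ * X).PosSemidef := by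
  simpa only [conjTranspose_eq_transpose_of_trivial] using posSemidef_conjTranspose_mul_self X

theorem sortedEig_transpose_mul_self_nonneg (X : Matrix (Fin n) (Fin n) ℝ) (i : Fin n) :
    0 ≤ sortedEig (Xᵀ * X) i := by
  rw [sortedEig_eq (posSemidef_transpose_mul_self X).1]
  exact (posSemidef_transpose_mul_self X).eigenvalues_nonneg _

end SortedEigenvalues

section Symmetrization

variable {n : ℕ}

theorem isHermitian_msym (Z : Matrix (Fin n) (Fin n) ℝ) : (msym Z).IsHermitian := by
  rw [IsHermitian, conjTranspose_eq_transpose_of_trivial, msym, transpose_smul, transpose_add,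
    transpose_transpose, add_comm]

theorem norm_msym_le (Z : Matrix (Fin n) (Fin n) ℝ) : ‖msym Z‖ ≤ ‖Z‖ := by
  calc ‖msym Z‖ ≤ 1 / 2 * (‖Z‖ + ‖Zᵀ‖) := by
        rw [msym, norm_smul, Real.norm_of_nonneg (by norm_num)]
        gcongr
        exact norm_add_le _ _
    _ = ‖Z‖ := by rw [frobenius_norm_transpose]; ring

theorem two_mul_smul_msym (ε : ℝ) (Z : Matrix (Fin n) (Fin n) ℝ) :
    (2 * ε) • msym Z = ε • Z + (ε • Z)ᵀ := by
  rw [msym, smul_smul, show 2 * ε * (1 / 2 : ℝ) = ε by ring, transpose_smul, smul_add]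

end Symmetrization

theorem norm_transpose_mul_self_sub_le {ι : Type*} [Fintype ι] [DecidableEq ι]
    {X A : Matrix ι ι ℝ} {t : ℝ} (ht : t ≤ 1) (hA : ‖A‖ ≤ t) (hX : ‖X - 1 - A‖ ≤ t ^ 2) :
    ‖Xᵀ * X - 1 - (A + Aᵀ)‖ ≤ 6 * t ^ 2 := by
  set E := X - 1 - A
  have ht0 : 0 ≤ t := (norm_nonneg A).trans hA
  have hAE : ‖A + E‖ ≤ 2 * t := by
    calc ‖A + E‖ ≤ t + t ^ 2 := (norm_add_le _ _).trans (add_le_add hA hX)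
      _ ≤ 2 * t := by nlinarith
  have hexpand : Xᵀ * X - 1 - (A + Aᵀ) = Eᵀ + E + (A + E)ᵀ * (A + E) := by
    have hX' : X = 1 + (A + E) := by simp only [E]; abel
    rw [hX', transpose_add, transpose_one, add_mul, one_mul, mul_add, mul_one, transpose_add]
    abel
  calc ‖Xᵀ * X - 1 - (A + Aᵀ)‖ ≤ ‖Eᵀ‖ + ‖E‖ + ‖(A + E)ᵀ‖ * ‖A + E‖ := by
        rw [hexpand]
        exact (norm_add_le _ _).trans (add_le_add (norm_add_le _ _) (norm_mul_le _ _))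
    _ ≤ t ^ 2 + t ^ 2 + 2 * t * (2 * t) := by
        rw [frobenius_norm_transpose, frobenius_norm_transpose]
        gcongr
    _ = 6 * t ^ 2 := by ring

theorem abs_sqrt_sub_le {x c : ℝ} (hx : 0 ≤ x) (hc : 0 < c) : |√x - c| ≤ |x - c ^ 2| / c := by
  rw [le_div_iff₀ hc]
  calc |√x - c| * c ≤ |√x - c| * (√x + c) := by gcongr; linarith [Real.sqrt_nonneg x]
    _ = |x - c ^ 2| := by
        rw [← abs_of_pos (by linarith [Real.sqrt_nonneg x] : 0 < √x + c), ← abs_mul]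
        congr 1
        linear_combination Real.sq_sqrt hx

theorem abs_sortedEig_mexp_sub_le {n : ℕ} {Z : Matrix (Fin n) (Fin n) ℝ} {ε r : ℝ} (hε : 0 < ε)
    (hZ : ‖Z‖ ≤ r) (hεr : ε * r ≤ 1) (i : Fin n) :
    |sortedEig ((mexp (ε • Z))ᵀ * mexp (ε • Z)) i - (1 + 2 * ε * sortedEig (msym Z) i)|
      ≤ 6 * (ε * r) ^ 2 := by
  set X := mexp (ε • Z)
  set R := Xᵀ * X - 1 - (ε • Z + (ε • Z)ᵀ)
  have hεZ : ‖ε • Z‖ ≤ ε * r := by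
    rw [norm_smul, Real.norm_of_nonneg hε.le]
    gcongr
  have hR : ‖R‖ ≤ 6 * (ε * r) ^ 2 := norm_transpose_mul_self_sub_le hεr hεZ
    ((norm_mexp_sub_one_sub_le (hεZ.trans hεr)).trans (by gcongr))
  refine abs_sortedEig_sub_le (posSemidef_transpose_mul_self X).1 (isHermitian_msym Z)
    (by positivity) (fun x hx => ?_) i
  have hXR : Xᵀ * X = 1 + (2 * ε) • msym Z + R := by rw [two_mul_smul_msym]; simp only [R]; abel
  rw [hXR, rayleigh_add, rayleigh_add, rayleigh_one hx, rayleigh_smul, add_sub_cancel_left]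
  exact (abs_rayleigh_le_norm R hx).trans hR

theorem stmt8_general (n : ℕ) (r : ℝ) (hr : 0 < r) :
    ∃ ε₀ > (0 : ℝ), ∃ C > (0 : ℝ), ∀ Z : Matrix (Fin n) (Fin n) ℝ, frob Z ≤ r →
      ∀ ε : ℝ, 0 < ε → ε ≤ ε₀ → ∀ i : Fin n,
        |singVals (mexp (ε • Z)) i - 1 - ε * sortedEig (msym Z) i| ≤ C * ε ^ 2 := by
  refine ⟨1 / (2 * r), by positivity, 14 * r ^ 2, by positivity, fun Z hZ ε hε hεle i => ?_⟩
  rw [frob_eq_norm] at hZ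
  have hεr : ε * r ≤ 1 / 2 := by
    rw [le_div_iff₀ (by positivity)] at hεle
    linarith
  set μ := sortedEig (msym Z) i
  set lam := sortedEig ((mexp (ε • Z))ᵀ * mexp (ε • Z)) i
  have hμ : |ε * μ| ≤ ε * r := by
    rw [abs_mul, abs_of_pos hε]
    gcongr
    exact (abs_sortedEig_le_norm (isHermitian_msym Z) i).trans ((norm_msym_le Z).trans hZ)
  have hlam : |lam - (1 + 2 * ε * μ)| ≤ 6 * (ε * r) ^ 2 :=
    abs_sortedEig_mexp_sub_le hε hZ (by linarith) i
  have hc : 1 / 2 ≤ 1 + ε * μ := by linarith [neg_abs_le (ε * μ)]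
  have hsq : |lam - (1 + ε * μ) ^ 2| ≤ 7 * (ε * r) ^ 2 := by
    calc |lam - (1 + ε * μ) ^ 2| = |(lam - (1 + 2 * ε * μ)) - (ε * μ) ^ 2| := by ring_nf
      _ ≤ |lam - (1 + 2 * ε * μ)| + |ε * μ| ^ 2 := by rw [← abs_pow]; exact abs_sub _ _
      _ ≤ 6 * (ε * r) ^ 2 + (ε * r) ^ 2 := by gcongr
      _ = 7 * (ε * r) ^ 2 := by ring
  calc |singVals (mexp (ε • Z)) i - 1 - ε * μ| = |√lam - (1 + ε * μ)| := by rw [sub_sub]; rfl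
    _ ≤ |lam - (1 + ε * μ) ^ 2| / (1 + ε * μ) :=
        abs_sqrt_sub_le (sortedEig_transpose_mul_self_nonneg _ i) (by linarith)
    _ ≤ 7 * (ε * r) ^ 2 / (1 / 2) := by gcongr
    _ = 14 * r ^ 2 * ε ^ 2 := by ring

/-- Expansion `σ_i(e^{εZ}) = 1 + ε λ_i(Z_sym) + O(ε²)`, uniformly on bounded sets. -/
theorem stmt8 (n : ℕ) (hn : 1 ≤ n) (r : ℝ) (hr : 0 < r) :
    ∃ ε₀ > (0 : ℝ), ∃ C > (0 : ℝ), ∀ Z : Matrix (Fin n) (Fin n) ℝ, frob Z ≤ r →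
      ∀ ε : ℝ, 0 < ε → ε ≤ ε₀ → ∀ i : Fin n,
        |singVals (mexp (ε • Z)) i - 1 - ε * sortedEig (msym Z) i| ≤ C * ε ^ 2 :=
  stmt8_general n r hr
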